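/- arXiv:2402.11660 — 8 statements merged into one kernel-verified Lean document; each statement's English description precedes it below -/
import Mathlib

section
/- Let (G, B) be a Rota–Baxter group of weight 1. Define g ∘ h := g B(g) h B(g)^{-1}. Then (G, ∘) is a group. -/
/-- If `(G, B)` is a Rota–Baxter group of weight 1 and `g ∘ h := g B(g) h B(g)⁻¹`, then
`(G, ∘)` is a group: `∘` is associative, `1` is a two-sided identity for `∘`, and every
element has a two-sided `∘`-inverse. -/
theorem stmt2 {G : Type*} [Group G] (B : G → G)
    (hB : ∀ g h : G, B g * B h = B (g * B g * h * (B g)⁻¹))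
    (op : G → G → G) (hop : ∀ g h : G, op g h = g * B g * h * (B g)⁻¹) :
    (∀ a b c : G, op (op a b) c = op a (op b c)) ∧
    (∀ a : G, op 1 a = a ∧ op a 1 = a) ∧
    (∀ a : G, ∃ b : G, op a b = 1 ∧ op b a = 1) := by
  have hB1 : B 1 = 1 := by
    have h := hB 1 1
    simp at h
    exact h
  refine ⟨?_, ?_, ?_⟩
  · intro a b c
    have hkey : B (op a b) = B a * B b := by
      rw [hop]; exact (hB a b).symm
    rw [hop (op a b) c, hkey, hop a b, hop a (op b c), hop b c]
    group
  · intro a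
    constructor
    · rw [hop, hB1]; group
    · rw [hop]; group
  · intro a
    refine ⟨(B a)⁻¹ * a⁻¹ * B a, ?_, ?_⟩
    · rw [hop]; group
    · have h1 : op a ((B a)⁻¹ * a⁻¹ * B a) = 1 := by rw [hop]; group
      have h2 : B a * B ((B a)⁻¹ * a⁻¹ * B a) = 1 := by
        rw [hB a ((B a)⁻¹ * a⁻¹ * B a)]
        rw [hop] at h1
        rw [show a * B a * ((B a)⁻¹ * a⁻¹ * B a) * (B a)⁻¹ = 1 from h1, hB1]
      have h3 : B ((B a)⁻¹ * a⁻¹ * B a) = (B a)⁻¹ := by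
        exact (inv_eq_of_mul_eq_one_right h2).symm
      rw [hop, h3]; group
end

section
/- Let (G, B) be a Rota–Baxter group of weight 1 and define g ∘ h := g B(g) h B(g)^{-1}. Then B is a Rota–Baxter operator of weight 1 on the group (G, ∘), i.e., B(g) ∘ B(h) = B(g ∘ (B(g) ∘ h ∘ B(g)^{-1_∘})) where inverses and products are taken in (G, ∘). -/
/-- If `(G, B)` is a Rota–Baxter group of weight 1, `g ∘ h := g B(g) h B(g)⁻¹`, and
`inv` is the inverse map of the group `(G, ∘)`, then `B` is a Rota–Baxter operator of
weight 1 on `(G, ∘)`: `B(g) ∘ B(h) = B(g ∘ B(g) ∘ h ∘ (B g)^{-1∘})`. -/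
theorem stmt4 {G : Type*} [Group G] (B : G → G)
    (hB : ∀ g h : G, B g * B h = B (g * B g * h * (B g)⁻¹))
    (op : G → G → G) (hop : ∀ g h : G, op g h = g * B g * h * (B g)⁻¹)
    (inv : G → G) (hinv : ∀ g : G, op g (inv g) = 1 ∧ op (inv g) g = 1) :
    ∀ g h : G, op (B g) (B h) = B (op (op (op g (B g)) h) (inv (B g))) := by
  -- `B` is a homomorphism from `(G, ∘)` to `G`
  have hop' : ∀ a b : G, B (op a b) = B a * B b := by
    intro a b; rw [hop, ← hB]
  -- `B 1 = 1`
  have hB1 : B 1 = 1 := by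
    have h1 := hB 1 1
    simp only [one_mul, mul_one] at h1
    rw [mul_inv_cancel] at h1
    have := mul_left_cancel (a := B 1) (b := B 1) (c := 1) (by rw [mul_one, h1])
    exact this
  intro g h
  -- `B (inv (B g)) = (B (B g))⁻¹`
  have h2 : B (B g) * B (inv (B g)) = 1 := by
    rw [← hop', (hinv (B g)).1, hB1]
  have h3 : B (inv (B g)) = (B (B g))⁻¹ :=
    (inv_eq_of_mul_eq_one_right h2).symm
  rw [hop, hop', hop', hop', h3, mul_assoc, mul_assoc]
end

section
/- Let (X, ·) and (A, *) be racks and Φ: A → Conj(Aut(X)) a rack homomorphism (where Conj(Aut(X)) is the group Aut(X) with operation f * g = g^{-1} f g). Define on Y = A × X the operation (a, x) ∘ (b, y) := (a * b, Φ_b(x)). Then (Y, ∘) is a rack. -/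
/-- A (right) rack: right translations are bijections and right self-distributivity holds. -/
def IsRack {X : Type*} (op : X → X → X) : Prop :=
  (∀ y, Function.Bijective fun x => op x y) ∧
  ∀ x y z, op (op x y) z = op (op x z) (op y z)

/-- Let `(X, ·)`, `(A, *)` be racks and `Φ : A → Conj(Aut X)` a rack homomorphism into the
conjugation quandle of the automorphism group of `X` (automorphisms act on the right, so
`Φ_{a*b} = Φ_b⁻¹ Φ_a Φ_b`, i.e. `Φ_{a*b}(x) = Φ_b(Φ_a(Φ_b⁻¹ x))` in left notation).
Then `Y = A × X` with `(a, x) ∘ (b, y) = (a * b, Φ_b(x))` is a rack. -/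
theorem stmt11 {X A : Type*} (opX : X → X → X) (opA : A → A → A)
    (hX : IsRack opX) (hA : IsRack opA)
    (Φ : A → Equiv.Perm X)
    (hΦaut : ∀ (a : A) (x y : X), Φ a (opX x y) = opX (Φ a x) (Φ a y))
    (hΦhom : ∀ (a b : A) (x : X), Φ (opA a b) x = Φ b (Φ a ((Φ b)⁻¹ x))) :
    IsRack (fun p q : A × X => (opA p.1 q.1, Φ q.1 p.2)) := by
  constructor
  · rintro ⟨b, y⟩
    have h1 := hA.1 b
    have h2 := (Φ b).bijective
    constructor
    · rintro ⟨a1, x1⟩ ⟨a2, x2⟩ h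
      simp only [Prod.mk.injEq] at h
      exact Prod.ext (h1.injective h.1) (h2.injective h.2)
    · rintro ⟨a, x⟩
      obtain ⟨a', ha⟩ := h1.surjective a
      obtain ⟨x', hx⟩ := h2.surjective x
      exact ⟨(a', x'), Prod.ext ha hx⟩
  · rintro ⟨a, x⟩ ⟨b, y⟩ ⟨c, z⟩
    refine Prod.ext (hA.2 a b c) ?_
    simp [hΦhom b c]
end

section
/- Let (X, ·), (A, *) be racks, Φ: A → Conj(Aut(X)) a rack homomorphism, and B: X → A a map. Then B is a relative averaging operator (B(x) * B(y) = B(Φ_{B(y)}(x)) for all x, y) if and only if the graph Γ_B = {(B(x), x) : x ∈ X} is a subrack of the semidirect product rack A ⋉_Φ X, where (a, x) ∘ (b, y) = (a * b, Φ_b(x)). -/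
/-- A subset `S` of a rack is a subrack when right translations by elements of `S`
restrict to bijections of `S` (in particular `S` is closed under the operation). -/
def IsSubrack {X : Type*} (op : X → X → X) (S : Set X) : Prop :=
  ∀ b ∈ S, Set.BijOn (fun a => op a b) S S

open Function Set

section RelativeAveraging

variable {X A : Type*}

def semidirectOp (opA : A → A → A) (Φ : A → Equiv.Perm X) (p q : A × X) : A × X :=
  (opA p.1 q.1, Φ q.1 p.2)

def IsRelAveragingOperator (opA : A → A → A) (Φ : A → Equiv.Perm X) (B : X → A) : Prop :=
  ∀ x y : X, opA (B x) (B y) = B (Φ (B y) x)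

def graphMap (B : X → A) (x : X) : A × X := (B x, x)

theorem graphMap_injective (B : X → A) : Injective (graphMap B) :=
  fun _ _ h => congrArg Prod.snd h

theorem mk_mem_range_graphMap {B : X → A} {a : A} {x : X} :
    (a, x) ∈ range (graphMap B) ↔ a = B x := by
  simp [graphMap, eq_comm]

variable {opA : A → A → A} {Φ : A → Equiv.Perm X} {B : X → A}

theorem IsRelAveragingOperator.semiconj_graphMap (hB : IsRelAveragingOperator opA Φ B) (y : X) :
    Semiconj (graphMap B) (Φ (B y)) (fun p => semidirectOp opA Φ p (graphMap B y)) :=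
  fun x => by simp only [graphMap, semidirectOp, hB x y]

theorem IsRelAveragingOperator.isSubrack_range_graphMap (hB : IsRelAveragingOperator opA Φ B) :
    IsSubrack (semidirectOp opA Φ) (range (graphMap B)) := by
  rintro _ ⟨y, rfl⟩
  exact (hB.semiconj_graphMap y).bijOn_range (Φ (B y)).bijective (graphMap_injective B)

theorem IsRelAveragingOperator.of_isSubrack_range_graphMap
    (h : IsSubrack (semidirectOp opA Φ) (range (graphMap B))) :
    IsRelAveragingOperator opA Φ B := fun x y =>
  mk_mem_range_graphMap.1 ((h _ (mem_range_self y)).mapsTo (mem_range_self x))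

theorem isRelAveragingOperator_iff_isSubrack_range_graphMap :
    IsRelAveragingOperator opA Φ B ↔ IsSubrack (semidirectOp opA Φ) (range (graphMap B)) :=
  ⟨IsRelAveragingOperator.isSubrack_range_graphMap,
    IsRelAveragingOperator.of_isSubrack_range_graphMap⟩

end RelativeAveraging

theorem stmt12_general {X A : Type*} (opA : A → A → A)
    (Φ : A → Equiv.Perm X)
    (B : X → A) :
    (∀ x y : X, opA (B x) (B y) = B (Φ (B y) x)) ↔
    IsSubrack (fun p q : A × X => (opA p.1 q.1, Φ q.1 p.2))
      (Set.range fun x : X => (B x, x)) :=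
  isRelAveragingOperator_iff_isSubrack_range_graphMap

/-- Let `(X, ·)`, `(A, *)` be racks and `Φ : A → Conj(Aut X)` a rack homomorphism
(automorphisms act on the right, so `Φ_{a*b}(x) = Φ_b(Φ_a(Φ_b⁻¹ x))` in left notation).
A map `B : X → A` is a relative averaging operator, i.e. `B(x) * B(y) = B(Φ_{B y}(x))`,
iff its graph `Γ_B = {(B x, x)}` is a subrack of the semidirect product rack
`A ⋉_Φ X`, where `(a, x) ∘ (b, y) = (a * b, Φ_b(x))`. -/
theorem stmt12 {X A : Type*} (opX : X → X → X) (opA : A → A → A)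
    (hX : IsRack opX) (hA : IsRack opA)
    (Φ : A → Equiv.Perm X)
    (hΦaut : ∀ (a : A) (x y : X), Φ a (opX x y) = opX (Φ a x) (Φ a y))
    (hΦhom : ∀ (a b : A) (x : X), Φ (opA a b) x = Φ b (Φ a ((Φ b)⁻¹ x)))
    (B : X → A) :
    (∀ x y : X, opA (B x) (B y) = B (Φ (B y) x)) ↔
    IsSubrack (fun p q : A × X => (opA p.1 q.1, Φ q.1 p.2))
      (Set.range fun x : X => (B x, x)) :=
  stmt12_general opA Φ B
end

section
/- Let (X, ·) be a rack and B: X → X a right averaging operator, i.e., B(x)·B(y) = B(x·B(y)) for all x, y. Define x ∘ y := x · B(y). Then (X, ∘) is a rack. Moreover, if additionally x·B(x) = x for all x, then (X, ∘) is a quandle. -/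
/-- A quandle is an idempotent rack. -/
def IsQuandle {X : Type*} (op : X → X → X) : Prop :=
  IsRack op ∧ ∀ x, op x x = x

/-- If `(X, ·)` is a rack and `B` a (right) averaging operator on it, then
`x ∘ y := x · B(y)` defines a rack structure on `X`; if moreover `x · B(x) = x` for all
`x`, then `(X, ∘)` is a quandle. -/
theorem stmt13 {X : Type*} (op : X → X → X) (hX : IsRack op) (B : X → X)
    (hB : ∀ x y : X, op (B x) (B y) = B (op x (B y))) :
    IsRack (fun x y => op x (B y)) ∧
    ((∀ x : X, op x (B x) = x) → IsQuandle (fun x y => op x (B y))) := by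
  obtain ⟨hbij, hdist⟩ := hX
  have hr : IsRack (fun x y => op x (B y)) := by
    constructor
    · intro y; exact hbij (B y)
    · intro x y z
      simp only
      rw [hdist, hB]
  exact ⟨hr, fun hid => ⟨hr, fun x => hid x⟩⟩
end

section
/- Let (X, ·) be a rack with averaging operator B, and define x ∘ y := x · B(y). Then B is an averaging operator on the rack (X, ∘), and B: (X, ∘) → (X, ·) is a rack homomorphism, i.e., B(x ∘ y) = B(x)·B(y). -/
/-- If `(X, ·)` is a rack with averaging operator `B` and `x ∘ y := x · B(y)`, then `B` is
an averaging operator on `(X, ∘)` and `B : (X, ∘) → (X, ·)` is a rack homomorphism. -/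
theorem stmt14 {X : Type*} (op : X → X → X)
    (hrack : (∀ y, Function.Bijective fun x => op x y) ∧
      ∀ x y z, op (op x y) z = op (op x z) (op y z))
    (B : X → X) (hB : ∀ x y : X, op (B x) (B y) = B (op x (B y)))
    (op' : X → X → X) (hop' : ∀ x y : X, op' x y = op x (B y)) :
    (∀ x y : X, op' (B x) (B y) = B (op' x (B y))) ∧
    (∀ x y : X, B (op' x y) = op (B x) (B y)) := by
  constructor <;> intro x y <;> simp only [hop', ← hB]
end

section
/- Let (X, ·) be a rack with averaging operator B. Then the image B(X) is a subrack of X. -/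
/-- If `(X, ·)` is a rack with averaging operator `B`, then the image of `B` is a subrack
of `X`: it is closed under the operation and right translations by its elements restrict
to bijections of it. -/
theorem stmt15 {X : Type*} (op : X → X → X) (hX : IsRack op) (B : X → X)
    (hB : ∀ x y : X, op (B x) (B y) = B (op x (B y))) :
    (∀ a ∈ Set.range B, ∀ b ∈ Set.range B, op a b ∈ Set.range B) ∧
    (∀ b ∈ Set.range B, Set.BijOn (fun a => op a b) (Set.range B) (Set.range B)) := by
  obtain ⟨hbij, _⟩ := hX
  constructor
  · rintro a ⟨x, rfl⟩ b ⟨y, rfl⟩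
    exact ⟨op x (B y), (hB x y).symm⟩
  · rintro b ⟨y, rfl⟩
    refine ⟨?_, ?_, ?_⟩
    · rintro a ⟨x, rfl⟩
      exact ⟨op x (B y), (hB x y).symm⟩
    · exact fun a _ a' _ h => (hbij (B y)).1 h
    · rintro c ⟨z, rfl⟩
      obtain ⟨x, hx⟩ := (hbij (B y)).2 z
      exact ⟨B x, ⟨x, rfl⟩, by simp only [hB x y, hx]⟩
end

section
/- Let (G, B) be a Rota–Baxter group of weight 1 such that B(b)^{-1} b lies in the center of G for every b ∈ G. Then the B-conjugation groupoid (G, *_B) with x *_B y := B(y) x B(y)^{-1} is a rack. If additionally B(a) commutes with a for every a ∈ G, then (G, *_B) is a quandle. -/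
/-- Let `(G, B)` be a Rota–Baxter group of weight 1 such that `B(b)⁻¹ b` is central for
every `b`. Then the `B`-conjugation groupoid `x *_B y := B(y) x B(y)⁻¹` is a rack; if
additionally `B(a)` commutes with `a` for every `a`, it is a quandle. -/
theorem stmt19 {G : Type*} [Group G] (B : G → G)
    (hB : ∀ g h : G, B g * B h = B (g * B g * h * (B g)⁻¹))
    (hc : ∀ b : G, (B b)⁻¹ * b ∈ Subgroup.center G) :
    IsRack (fun x y : G => B y * x * (B y)⁻¹) ∧
    ((∀ a : G, Commute (B a) a) → IsQuandle (fun x y : G => B y * x * (B y)⁻¹)) := by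
  -- Since `(B a)⁻¹ * a` is central, conjugation by `B a` equals conjugation by `a`.
  have h : ∀ a x : G, B a * x * (B a)⁻¹ = a * x * a⁻¹ := by
    intro a x
    have hz := Subgroup.mem_center_iff.mp (hc a) x
    calc B a * x * (B a)⁻¹
        = B a * (x * ((B a)⁻¹ * a)) * a⁻¹ := by group
      _ = B a * (((B a)⁻¹ * a) * x) * a⁻¹ := by rw [hz]
      _ = a * x * a⁻¹ := by group
  have hrack : IsRack (fun x y : G => B y * x * (B y)⁻¹) := by
    constructor
    · intro y
      constructor
      · intro x₁ x₂ hx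
        simp only at hx
        exact mul_left_cancel (mul_right_cancel hx)
      · intro x
        exact ⟨(B y)⁻¹ * x * B y, by group⟩
    · intro x y z
      simp only
      rw [h, h, h (B z * y * (B z)⁻¹), h, h]
      group
  refine ⟨hrack, fun _ => ⟨hrack, fun x => ?_⟩⟩
  simp only
  rw [h]
  group
end
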